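/- arXiv:0707.4469 — 2 statements merged into one kernel-verified Lean document; each statement's English description precedes it below -/
import Mathlib

section
/- If the semigroup {T_t} is symmetric on L²(m) (hence m is an invariant measure, i.e. ∫ T_h u dm = ∫ u dm for u ∈ D), then D_0 is dense in L₁⁺(m): for each u ∈ D there exist v_n ∈ D_0 with ∫ |v_n - u| dm → 0. -/
open MeasureTheory Filter Set ProbabilityTheory
open scoped ENNReal

noncomputable section

theorem key_lemma {E : Type*} [MeasurableSpace E] (m : Measure E) [SigmaFinite m]
    (u : E → ℝ) (hu : Measurable u) (hupos : ∀ x, 0 ≤ u x) (huint : Integrable u m)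
    (C : ℝ) (hC : ∀ x, u x ≤ C) (hCpos : 0 ≤ C)
    (g : ℝ → E → ℝ) (hgm : Measurable fun q : ℝ × E => g q.1 q.2)
    (hg0 : ∀ s x, 0 ≤ g s x) (hgC : ∀ s x, g s x ≤ C)
    (hgint : ∀ s, 0 ≤ s → Integrable (g s) m)
    (hginv : ∀ s, 0 ≤ s → ∫ x, g s x ∂m = ∫ x, u x ∂m)
    (hsmall : Tendsto (fun h : ℝ => eLpNorm (fun x => g h x - u x) 2 m)
      (nhdsWithin 0 (Ioi 0)) (nhds 0)) :
    Tendsto (fun t : ℝ => ∫ x, |t⁻¹ * (∫ s in Ioc (0:ℝ) t, g s x) - u x| ∂m)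
      (nhdsWithin 0 (Ioi 0)) (nhds 0) := by
  have hgms : ∀ s, Measurable (g s) :=
    fun s => hgm.comp (measurable_const.prodMk measurable_id)
  have hgmx : ∀ x, Measurable (fun s => g s x) :=
    fun x => hgm.comp (measurable_id.prodMk measurable_const)
  have hgmswap : Measurable fun p : E × ℝ => g p.2 p.1 := hgm.comp measurable_swap
  rw [Metric.tendsto_nhds]
  intro ε hε
  -- Step A : a finite measure set catching most of the mass of u
  obtain ⟨Fs, hFsm, hFsfin, hFssmall⟩ :
      ∃ Fs : Set E, MeasurableSet Fs ∧ m Fs < ∞ ∧ ∫ x in Fsᶜ, u x ∂m < ε/8 := by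
    have hmono := tendsto_setIntegral_of_monotone (s := spanningSets m)
        (fun i => measurableSet_spanningSets m i) (monotone_spanningSets m)
        (f := u) (by rw [iUnion_spanningSets]; exact huint.integrableOn)
    rw [iUnion_spanningSets, Measure.restrict_univ] at hmono
    have hev : ∀ᶠ i in atTop, ∫ x, u x ∂m - ε/8 < ∫ x in spanningSets m i, u x ∂m :=
      hmono.eventually_const_lt (by linarith)
    obtain ⟨i, hi⟩ := hev.exists
    refine ⟨spanningSets m i, measurableSet_spanningSets m i,
      measure_spanningSets_lt_top m i, ?_⟩
    have hsplit : ∫ x in spanningSets m i, u x ∂m + ∫ x in (spanningSets m i)ᶜ, u x ∂m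
        = ∫ x, u x ∂m := integral_add_compl (measurableSet_spanningSets m i) huint
    linarith
  -- Step B : smallness of the L² norm below threshold δ
  set A : ℝ≥0∞ := (m Fs) ^ (1/2 : ℝ) with hA
  have hAfin : A ≠ ∞ := (ENNReal.rpow_lt_top_of_nonneg (by norm_num) hFsfin.ne).ne
  have hAne : A + 1 ≠ ∞ := ENNReal.add_ne_top.mpr ⟨hAfin, ENNReal.one_ne_top⟩
  set δ : ℝ≥0∞ := ENNReal.ofReal (ε/8) / (A + 1) with hδ
  have hδpos : 0 < δ :=
    ENNReal.div_pos (ENNReal.ofReal_pos.mpr (by linarith)).ne' hAne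
  have hev : ∀ᶠ h in nhdsWithin (0:ℝ) (Ioi 0),
      eLpNorm (fun x => g h x - u x) 2 m < δ := hsmall.eventually_lt_const hδpos
  obtain ⟨t₀, ht₀, hsub⟩ := mem_nhdsGT_iff_exists_Ioc_subset.mp hev
  filter_upwards [Ioc_mem_nhdsGT_of_mem (left_mem_Ico.mpr ht₀)] with t ht
  obtain ⟨ht0, htt₀⟩ := ht
  have hvolIoc : volume (Ioc (0:ℝ) t) = ENNReal.ofReal t := by
    rw [Real.volume_Ioc, sub_zero]
  -- the averaged function
  set W : E → ℝ := fun x => ∫ s in Ioc (0:ℝ) t, g s x with hWdef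
  have hWm : Measurable W := by
    have := (hgmswap.stronglyMeasurable).integral_prod_right'
      (ν := volume.restrict (Ioc (0:ℝ) t))
    exact this.measurable
  have hconstInt : ∀ c : ℝ, IntegrableOn (fun _ : ℝ => c) (Ioc (0:ℝ) t) volume :=
    fun c => integrableOn_const (by rw [hvolIoc]; exact ENNReal.ofReal_ne_top)
  have hIntS : ∀ x, IntegrableOn (fun s => g s x) (Ioc (0:ℝ) t) volume := by
    intro x
    refine (hconstInt C).mono' ((hgmx x).aestronglyMeasurable) (ae_of_all _ fun s => ?_)
    rw [Real.norm_eq_abs, abs_of_nonneg (hg0 s x)]; exact hgC s x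
  have hW0 : ∀ x, 0 ≤ W x := fun x => integral_nonneg fun s => hg0 s x
  set Φ : E → ℝ≥0∞ := fun x => ∫⁻ s in Ioc (0:ℝ) t, ENNReal.ofReal (g s x) with hΦdef
  have hΦm : Measurable Φ :=
    Measurable.lintegral_prod_right' (f := fun p : E × ℝ => ENNReal.ofReal (g p.2 p.1))
      (ENNReal.measurable_ofReal.comp hgmswap)
  have hWΦ : ∀ x, W x = (Φ x).toReal := by
    intro x
    rw [hWdef]
    exact integral_eq_lintegral_of_nonneg_ae (ae_of_all _ fun s => hg0 s x)
      ((hgmx x).aestronglyMeasurable)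
  have hΦfin : ∀ x, Φ x ≤ ENNReal.ofReal t * ENNReal.ofReal C := by
    intro x
    calc Φ x ≤ ∫⁻ s in Ioc (0:ℝ) t, ENNReal.ofReal C ∂volume :=
          lintegral_mono fun s => ENNReal.ofReal_le_ofReal (hgC s x)
      _ = ENNReal.ofReal C * volume (Ioc (0:ℝ) t) := setLIntegral_const _ _
      _ = ENNReal.ofReal t * ENNReal.ofReal C := by rw [hvolIoc, mul_comm]
  have hΦlint : ∫⁻ x, Φ x ∂m = ENNReal.ofReal t * ENNReal.ofReal (∫ x, u x ∂m) := by
    have hswap : ∫⁻ x, ∫⁻ s in Ioc (0:ℝ) t, ENNReal.ofReal (g s x) ∂volume ∂m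
        = ∫⁻ s in Ioc (0:ℝ) t, ∫⁻ x, ENNReal.ofReal (g s x) ∂m ∂volume :=
      lintegral_lintegral_swap ((ENNReal.measurable_ofReal.comp hgmswap).aemeasurable)
    rw [hΦdef]
    rw [hswap]
    have hinner : ∀ s ∈ Ioc (0:ℝ) t,
        ∫⁻ x, ENNReal.ofReal (g s x) ∂m = ENNReal.ofReal (∫ x, u x ∂m) := by
      intro s hs
      rw [← ofReal_integral_eq_lintegral_ofReal (hgint s hs.1.le)
        (ae_of_all _ fun x => hg0 s x), hginv s hs.1.le]
    rw [setLIntegral_congr_fun measurableSet_Ioc hinner]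
    rw [setLIntegral_const, hvolIoc, mul_comm]
  have hWint : Integrable W m := by
    have h1 : Integrable (fun x => (Φ x).toReal) m :=
      integrable_toReal_of_lintegral_ne_top hΦm.aemeasurable
        (by rw [hΦlint]; exact ENNReal.mul_ne_top ENNReal.ofReal_ne_top ENNReal.ofReal_ne_top)
    exact h1.congr (ae_of_all _ fun x => (hWΦ x).symm)
  have hWintegral : ∫ x, W x ∂m = t * ∫ x, u x ∂m := by
    rw [integral_congr_ae (ae_of_all _ hWΦ)]
    rw [integral_toReal hΦm.aemeasurable (ae_of_all _ fun x =>
      lt_of_le_of_lt (hΦfin x) (ENNReal.mul_lt_top ENNReal.ofReal_lt_top ENNReal.ofReal_lt_top))]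
    rw [hΦlint, ENNReal.toReal_mul, ENNReal.toReal_ofReal ht0.le,
      ENNReal.toReal_ofReal (integral_nonneg hupos)]
  set v : E → ℝ := fun x => t⁻¹ * W x with hvdef
  have hvm : Measurable v := hWm.const_mul t⁻¹
  have hvint : Integrable v m := hWint.const_mul _
  have hvintegral : ∫ x, v x ∂m = ∫ x, u x ∂m := by
    rw [hvdef]
    rw [integral_const_mul, hWintegral, ← mul_assoc, inv_mul_cancel₀ (ne_of_gt ht0), one_mul]
  have hv0 : ∀ x, 0 ≤ v x := fun x => mul_nonneg (inv_nonneg.mpr ht0.le) (hW0 x)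
  -- identity ∫ |v - u| = 2 ∫ (u - v)⁺
  have hmaxint : Integrable (fun x => max (u x - v x) 0) m := by
    refine huint.mono' ((hu.sub hvm).max measurable_const).aestronglyMeasurable
      (ae_of_all _ fun x => ?_)
    rw [Real.norm_eq_abs, abs_of_nonneg (le_max_right _ _)]
    exact max_le (by linarith [hv0 x]) (hupos x)
  have hident : ∫ x, |v x - u x| ∂m = 2 * ∫ x, max (u x - v x) 0 ∂m := by
    have hpt : ∀ x, |v x - u x| = 2 * max (u x - v x) 0 - (u x - v x) := by
      intro x; rcases le_total (u x - v x) 0 with h | h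
      · rw [max_eq_right h, abs_of_nonneg (by linarith)]; ring
      · rw [max_eq_left h, abs_of_nonpos (by linarith)]; ring
    have h2int : Integrable (fun x => 2 * max (u x - v x) 0) m := hmaxint.const_mul 2
    have h3int : Integrable (fun x => u x - v x) m := huint.sub hvint
    rw [integral_congr_ae (ae_of_all _ hpt), integral_sub h2int h3int,
      integral_sub huint hvint, hvintegral, sub_self, sub_zero, integral_const_mul]
  -- the main bound
  have hbound : ∫ x, max (u x - v x) 0 ∂m ≤ ε/4 := by
    have hmaxSint : ∀ x, IntegrableOn (fun s => max (u x - g s x) 0) (Ioc (0:ℝ) t) volume := by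
      intro x
      refine (hconstInt C).mono'
        (((measurable_const.sub (hgmx x)).max measurable_const).aestronglyMeasurable)
        (ae_of_all _ fun s => ?_)
      rw [Real.norm_eq_abs, abs_of_nonneg (le_max_right _ _)]
      exact max_le (by linarith [hg0 s x, hC x]) hCpos
    have hptwise : ∀ x, ENNReal.ofReal (max (u x - v x) 0)
        ≤ ENNReal.ofReal t⁻¹ *
          ∫⁻ s in Ioc (0:ℝ) t, ENNReal.ofReal (max (u x - g s x) 0) ∂volume := by
      intro x
      have h1 : u x - v x = t⁻¹ * ∫ s in Ioc (0:ℝ) t, (u x - g s x) ∂volume := by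
        rw [integral_sub (hconstInt (u x)) (hIntS x)]
        rw [setIntegral_const, measureReal_def, hvolIoc, ENNReal.toReal_ofReal ht0.le, smul_eq_mul]
        rw [hvdef, mul_sub, ← mul_assoc, inv_mul_cancel₀ (ne_of_gt ht0), one_mul]
      have h2 : max (u x - v x) 0 ≤ t⁻¹ * ∫ s in Ioc (0:ℝ) t, max (u x - g s x) 0 ∂volume := by
        apply max_le
        · rw [h1]
          apply mul_le_mul_of_nonneg_left _ (inv_nonneg.mpr ht0.le)
          exact integral_mono ((hconstInt (u x)).sub (hIntS x)) (hmaxSint x)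
            (fun s => le_max_left _ _)
        · exact mul_nonneg (inv_nonneg.mpr ht0.le)
            (integral_nonneg fun s => le_max_right _ _)
      calc ENNReal.ofReal (max (u x - v x) 0)
          ≤ ENNReal.ofReal (t⁻¹ * ∫ s in Ioc (0:ℝ) t, max (u x - g s x) 0 ∂volume) :=
            ENNReal.ofReal_le_ofReal h2
        _ = ENNReal.ofReal t⁻¹ *
            ENNReal.ofReal (∫ s in Ioc (0:ℝ) t, max (u x - g s x) 0 ∂volume) :=
            ENNReal.ofReal_mul (inv_nonneg.mpr ht0.le)
        _ = ENNReal.ofReal t⁻¹ *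
            ∫⁻ s in Ioc (0:ℝ) t, ENNReal.ofReal (max (u x - g s x) 0) ∂volume := by
            rw [ofReal_integral_eq_lintegral_ofReal (hmaxSint x)
              (ae_of_all _ fun s => le_max_right _ _)]
    have hmeas2 : Measurable fun p : E × ℝ => ENNReal.ofReal (max (u p.1 - g p.2 p.1) 0) :=
      ENNReal.measurable_ofReal.comp (((hu.comp measurable_fst).sub hgmswap).max
        measurable_const)
    have hswap2 : ∫⁻ x, ∫⁻ s in Ioc (0:ℝ) t,
          ENNReal.ofReal (max (u x - g s x) 0) ∂volume ∂m
        = ∫⁻ s in Ioc (0:ℝ) t, ∫⁻ x, ENNReal.ofReal (max (u x - g s x) 0) ∂m ∂volume :=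
      lintegral_lintegral_swap hmeas2.aemeasurable
    have hinner2 : ∀ s ∈ Ioc (0:ℝ) t,
        ∫⁻ x, ENNReal.ofReal (max (u x - g s x) 0) ∂m ≤ ENNReal.ofReal (ε/4) := by
      intro s hs
      have hsmalls : eLpNorm (fun x => g s x - u x) 2 m < δ :=
        hsub ⟨hs.1, hs.2.trans htt₀⟩
      have hFpart : ∫⁻ x in Fs, ENNReal.ofReal (max (u x - g s x) 0) ∂m ≤ δ * A := by
        calc ∫⁻ x in Fs, ENNReal.ofReal (max (u x - g s x) 0) ∂m
            ≤ ∫⁻ x in Fs, ‖u x - g s x‖ₑ ∂m := by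
              apply lintegral_mono; intro x
              exact le_trans (ENNReal.ofReal_le_ofReal
                (max_le (le_abs_self _) (abs_nonneg _)))
                (Real.enorm_eq_ofReal_abs _).ge
          _ = eLpNorm (fun x => u x - g s x) 1 (m.restrict Fs) :=
              eLpNorm_one_eq_lintegral_enorm.symm
          _ ≤ eLpNorm (fun x => u x - g s x) 2 (m.restrict Fs) *
              (m.restrict Fs) univ ^ (1/(1:ℝ≥0∞).toReal - 1/(2:ℝ≥0∞).toReal) :=
              eLpNorm_le_eLpNorm_mul_rpow_measure_univ one_le_two
                ((hu.sub (hgms s)).aestronglyMeasurable)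
          _ ≤ δ * A := by
              apply mul_le_mul'
              · calc eLpNorm (fun x => u x - g s x) 2 (m.restrict Fs)
                    ≤ eLpNorm (fun x => u x - g s x) 2 m :=
                      eLpNorm_mono_measure _ Measure.restrict_le_self
                  _ = eLpNorm (fun x => g s x - u x) 2 m := by
                      rw [show (fun x => u x - g s x) = -(fun x => g s x - u x) by
                        funext x; simp]
                      exact eLpNorm_neg _ _ _
                  _ ≤ δ := hsmalls.le
              · rw [Measure.restrict_apply_univ]
                rw [show (1/(1:ℝ≥0∞).toReal - 1/(2:ℝ≥0∞).toReal) = (1/2 : ℝ) by norm_num]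
      have hFcpart : ∫⁻ x in Fsᶜ, ENNReal.ofReal (max (u x - g s x) 0) ∂m
          ≤ ENNReal.ofReal (ε/8) := by
        calc ∫⁻ x in Fsᶜ, ENNReal.ofReal (max (u x - g s x) 0) ∂m
            ≤ ∫⁻ x in Fsᶜ, ENNReal.ofReal (u x) ∂m :=
              lintegral_mono fun x => ENNReal.ofReal_le_ofReal
                (max_le (by linarith [hg0 s x]) (hupos x))
          _ = ENNReal.ofReal (∫ x in Fsᶜ, u x ∂m) :=
              (ofReal_integral_eq_lintegral_ofReal huint.integrableOn
                (ae_of_all _ hupos)).symm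
          _ ≤ ENNReal.ofReal (ε/8) := ENNReal.ofReal_le_ofReal hFssmall.le
      calc ∫⁻ x, ENNReal.ofReal (max (u x - g s x) 0) ∂m
          = ∫⁻ x in Fs, ENNReal.ofReal (max (u x - g s x) 0) ∂m
            + ∫⁻ x in Fsᶜ, ENNReal.ofReal (max (u x - g s x) 0) ∂m :=
            (lintegral_add_compl _ hFsm).symm
        _ ≤ δ * A + ENNReal.ofReal (ε/8) := add_le_add hFpart hFcpart
        _ ≤ ENNReal.ofReal (ε/8) + ENNReal.ofReal (ε/8) := by
            apply add_le_add_left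
            calc δ * A ≤ δ * (A + 1) := by gcongr; exact le_self_add
              _ = ENNReal.ofReal (ε/8) := ENNReal.div_mul_cancel
                  (by simp) hAne
        _ = ENNReal.ofReal (ε/4) := by
            rw [← ENNReal.ofReal_add (by linarith) (by linarith)]; congr 1; ring
    have hlint : ∫⁻ x, ENNReal.ofReal (max (u x - v x) 0) ∂m ≤ ENNReal.ofReal (ε/4) := by
      calc ∫⁻ x, ENNReal.ofReal (max (u x - v x) 0) ∂m
          ≤ ∫⁻ x, ENNReal.ofReal t⁻¹ *
              ∫⁻ s in Ioc (0:ℝ) t, ENNReal.ofReal (max (u x - g s x) 0) ∂volume ∂m :=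
            lintegral_mono hptwise
        _ = ENNReal.ofReal t⁻¹ * ∫⁻ x, ∫⁻ s in Ioc (0:ℝ) t,
              ENNReal.ofReal (max (u x - g s x) 0) ∂volume ∂m :=
            lintegral_const_mul _ (Measurable.lintegral_prod_right' hmeas2)
        _ = ENNReal.ofReal t⁻¹ * ∫⁻ s in Ioc (0:ℝ) t, ∫⁻ x,
              ENNReal.ofReal (max (u x - g s x) 0) ∂m ∂volume := by rw [hswap2]
        _ ≤ ENNReal.ofReal t⁻¹ * (ENNReal.ofReal (ε/4) * volume (Ioc (0:ℝ) t)) := by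
            gcongr
            calc ∫⁻ s in Ioc (0:ℝ) t, ∫⁻ x,
                  ENNReal.ofReal (max (u x - g s x) 0) ∂m ∂volume
                ≤ ∫⁻ s in Ioc (0:ℝ) t, ENNReal.ofReal (ε/4) ∂volume := by
                  apply setLIntegral_mono_ae aemeasurable_const
                  exact ae_of_all _ hinner2
              _ = ENNReal.ofReal (ε/4) * volume (Ioc (0:ℝ) t) := setLIntegral_const _ _
        _ = ENNReal.ofReal (ε/4) := by
            rw [hvolIoc, mul_comm (ENNReal.ofReal (ε/4)) _, ← mul_assoc,
              ← ENNReal.ofReal_mul (inv_nonneg.mpr ht0.le),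
              inv_mul_cancel₀ (ne_of_gt ht0)]
            simp
    have heq := integral_eq_lintegral_of_nonneg_ae (μ := m)
      (f := fun x => max (u x - v x) 0) (ae_of_all _ fun x => le_max_right _ _)
      (((hu.sub hvm).max measurable_const).aestronglyMeasurable)
    rw [heq]
    calc (∫⁻ x, ENNReal.ofReal (max (u x - v x) 0) ∂m).toReal
        ≤ (ENNReal.ofReal (ε/4)).toReal :=
          ENNReal.toReal_mono ENNReal.ofReal_ne_top hlint
      _ = ε/4 := ENNReal.toReal_ofReal (by linarith)
  -- conclude
  rw [Real.dist_eq, sub_zero, abs_of_nonneg (integral_nonneg fun x => abs_nonneg _)]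
  calc ∫ x, |t⁻¹ * W x - u x| ∂m = ∫ x, |v x - u x| ∂m := by rfl
    _ = 2 * ∫ x, max (u x - v x) 0 ∂m := hident
    _ ≤ 2 * (ε/4) := by linarith [hbound]
    _ < ε := by linarith


/-- `ap P t f x = (p_t f)(x) = ∫ f(y) p_t(x, dy)`. -/
def ap {E : Type*} [MeasurableSpace E] (P : ℝ → E → Measure E) (t : ℝ) (f : E → ℝ) (x : E) : ℝ :=
  ∫ y, f y ∂(P t x)

def apKer {E : Type*} [MeasurableSpace E] (P : ℝ → E → Measure E)
    [∀ t x, IsProbabilityMeasure (P t x)]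
    (hPmeas : ∀ s : Set E, MeasurableSet s →
      Measurable (fun q : ℝ × E => (P q.1 q.2 s).toReal)) : Kernel (ℝ × E) E where
  toFun := fun q => P q.1 q.2
  measurable' := by
    apply Measure.measurable_of_measurable_coe
    intro s hs
    have : (fun q : ℝ × E => P q.1 q.2 s) =
        fun q => ENNReal.ofReal ((P q.1 q.2 s).toReal) := by
      funext q; rw [ENNReal.ofReal_toReal (measure_ne_top _ _)]
    rw [this]
    exact ENNReal.measurable_ofReal.comp (hPmeas s hs)

theorem apKer_markov {E : Type*} [MeasurableSpace E] (P : ℝ → E → Measure E)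
    [∀ t x, IsProbabilityMeasure (P t x)]
    (hPmeas : ∀ s : Set E, MeasurableSet s →
      Measurable (fun q : ℝ × E => (P q.1 q.2 s).toReal)) : IsMarkovKernel (apKer P hPmeas) :=
  ⟨fun a => by simpa [apKer, Kernel.coe_mk] using
    (inferInstance : IsProbabilityMeasure (P a.1 a.2))⟩

theorem ap_jointly_measurable {E : Type*} [MeasurableSpace E] (P : ℝ → E → Measure E)
    [∀ t x, IsProbabilityMeasure (P t x)]
    (hPmeas : ∀ s : Set E, MeasurableSet s →
      Measurable (fun q : ℝ × E => (P q.1 q.2 s).toReal))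
    (u : E → ℝ) (hu : Measurable u) :
    Measurable (fun q : ℝ × E => ap P q.1 u q.2) := by
  haveI := apKer_markov P hPmeas
  have h : StronglyMeasurable fun q : ℝ × E => ∫ y, u y ∂((apKer P hPmeas) q) := by
    apply MeasureTheory.StronglyMeasurable.integral_kernel_prod_right'
      (f := fun (q : (ℝ × E) × E) => u q.2)
    exact (hu.comp measurable_snd).stronglyMeasurable
  exact h.measurable

/-- Lemma 2.3 (second part): if the semigroup is symmetric, hence `m` is invariant
(`∫ p_h u dm = ∫ u dm` for `u ∈ D`, `h ≥ 0`), then `D₀` is dense in `L₁⁺(m)`: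
for each `u ∈ D` there are `vₙ ∈ D₀` with `∫ |vₙ - u| dm → 0`. -/
theorem D0_dense_in_L1_plus {E : Type*} [MeasurableSpace E]
    (m : Measure E) [SigmaFinite m]
    (P : ℝ → E → Measure E) [∀ t x, IsProbabilityMeasure (P t x)]
    (hPmeas : ∀ s : Set E, MeasurableSet s →
      Measurable (fun q : ℝ × E => (P q.1 q.2 s).toReal))
    -- strong continuity of the semigroup on L²(m)
    (hcont : ∀ f : E → ℝ, MemLp f 2 m →
      Tendsto (fun h : ℝ => eLpNorm (fun x => ap P h f x - f x) 2 m)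
        (nhdsWithin 0 (Ioi 0)) (nhds 0))
    -- invariance of m (consequence of symmetry): ∫ p_h u dm = ∫ u dm for u ∈ D
    (hinv : ∀ u : E → ℝ, Measurable u → (∀ x, 0 ≤ u x) → (∃ C, ∀ x, u x ≤ C) →
      Integrable u m → ∀ h : ℝ, 0 ≤ h → ∫ x, ap P h u x ∂m = ∫ x, u x ∂m) :
    ∀ u : E → ℝ, Measurable u → (∀ x, 0 ≤ u x) → (∃ C, ∀ x, u x ≤ C) → Integrable u m →
      ∃ (w : ℕ → E → ℝ) (t : ℕ → ℝ),
        (∀ n, Measurable (w n) ∧ (∀ x, 0 ≤ w n x) ∧ (∃ C, ∀ x, w n x ≤ C) ∧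
          Integrable (w n) m ∧ 0 < t n) ∧
        Tendsto (fun n =>
            ∫ x, |(t n)⁻¹ * (∫ s in Ioc (0 : ℝ) (t n), ap P s (w n) x) - u x| ∂m)
          atTop (nhds 0) := by
  intro u hu hupos hubdd huint
  by_cases h0 : ∫ x, u x ∂m = 0
  · -- degenerate case : u = 0 a.e.
    refine ⟨fun _ _ => 0, fun _ => 1, ?_, ?_⟩
    · intro n
      exact ⟨measurable_const, fun x => le_refl 0, ⟨0, fun x => le_refl 0⟩,
        integrable_zero _ _ _, one_pos⟩
    · have hz : (fun n : ℕ => ∫ x, |(1:ℝ)⁻¹ * (∫ s in Ioc (0 : ℝ) 1,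
          ap P s (fun _ => (0:ℝ)) x) - u x| ∂m) = fun _ => 0 := by
        funext n
        have h1 : ∀ x, |(1:ℝ)⁻¹ * (∫ s in Ioc (0 : ℝ) 1, ap P s (fun _ => (0:ℝ)) x) - u x|
            = u x := by
          intro x; simp [ap, abs_of_nonneg (hupos x)]
        rw [integral_congr_ae (ae_of_all _ h1)]
        exact h0
      rw [hz]
      exact tendsto_const_nhds
  · -- main case
    obtain ⟨C0, hC0⟩ := hubdd
    set C : ℝ := max C0 0 with hCdef
    have hC : ∀ x, u x ≤ C := fun x => le_trans (hC0 x) (le_max_left _ _)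
    have hCpos : 0 ≤ C := le_max_right _ _
    set g : ℝ → E → ℝ := fun s x => ap P s u x with hgdef
    have hgm : Measurable fun q : ℝ × E => g q.1 q.2 := ap_jointly_measurable P hPmeas u hu
    have hgms : ∀ s, Measurable (g s) :=
      fun s => hgm.comp (measurable_const.prodMk measurable_id)
    have hgmx : ∀ x, Measurable (fun s => g s x) :=
      fun x => hgm.comp (measurable_id.prodMk measurable_const)
    have hg0 : ∀ s x, 0 ≤ g s x := fun s x => integral_nonneg hupos
    have hgC : ∀ s x, g s x ≤ C := by
      intro s x
      calc g s x = ∫ y, u y ∂(P s x) := rfl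
        _ ≤ ∫ _, C ∂(P s x) :=
          integral_mono_of_nonneg (ae_of_all _ hupos) (integrable_const C) (ae_of_all _ hC)
        _ = C := by simp
    have hgint : ∀ s, 0 ≤ s → Integrable (g s) m := by
      intro s hs
      by_contra hni
      have := hinv u hu hupos ⟨C0, hC0⟩ huint s hs
      rw [integral_undef hni] at this
      exact h0 this.symm
    have hginv : ∀ s, 0 ≤ s → ∫ x, g s x ∂m = ∫ x, u x ∂m :=
      fun s hs => hinv u hu hupos ⟨C0, hC0⟩ huint s hs
    -- u ∈ L²
    have hu2 : MemLp u 2 m := by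
      refine ⟨hu.aestronglyMeasurable, ?_⟩
      rw [eLpNorm_eq_lintegral_rpow_enorm_toReal (by norm_num) (by norm_num)]
      have hb : ∀ x, (‖u x‖₊ : ℝ≥0∞) ^ ((2:ℝ≥0∞).toReal) ≤ ENNReal.ofReal C * ‖u x‖₊ := by
        intro x
        have h1 : (‖u x‖₊ : ℝ≥0∞) = ENNReal.ofReal (u x) := by
          rw [← Real.enorm_eq_ofReal (hupos x), enorm_eq_nnnorm]
        rw [ENNReal.toReal_ofNat, h1]
        rw [show ((2:ℝ) = ((2:ℕ):ℝ)) by norm_num, ENNReal.rpow_natCast, pow_two]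
        exact mul_le_mul_left (ENNReal.ofReal_le_ofReal (hC x)) _
      calc (∫⁻ x, (‖u x‖₊ : ℝ≥0∞) ^ ((2:ℝ≥0∞).toReal) ∂m) ^ (1 / (2:ℝ≥0∞).toReal)
          ≤ (∫⁻ x, ENNReal.ofReal C * ‖u x‖₊ ∂m) ^ (1 / (2:ℝ≥0∞).toReal) := by
            gcongr
            exact hb _
        _ < ∞ := by
            rw [lintegral_const_mul _ hu.nnnorm.coe_nnreal_ennreal]
            apply ENNReal.rpow_lt_top_of_nonneg (by positivity)
            exact ENNReal.mul_ne_top ENNReal.ofReal_ne_top huint.2.ne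
    -- the key convergence statement
    have key : Tendsto (fun t : ℝ => ∫ x, |t⁻¹ * (∫ s in Ioc (0:ℝ) t, g s x) - u x| ∂m)
        (nhdsWithin 0 (Ioi 0)) (nhds 0) :=
      key_lemma m u hu hupos huint C hC hCpos g hgm hg0 hgC hgint hginv (hcont u hu2)
    refine ⟨fun _ => u, fun n => ((n : ℝ) + 1)⁻¹, ?_, ?_⟩
    · intro n
      exact ⟨hu, hupos, ⟨C0, hC0⟩, huint, by positivity⟩
    · have hseq : Tendsto (fun n : ℕ => ((n : ℝ) + 1)⁻¹) atTop (nhdsWithin 0 (Ioi 0)) := by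
        apply tendsto_nhdsWithin_of_tendsto_nhds_of_eventually_within
        · simpa only [one_div] using tendsto_one_div_add_atTop_nhds_zero_nat (𝕜 := ℝ)
        · filter_upwards with n
          have : (0:ℝ) < ((n : ℝ) + 1)⁻¹ := by positivity
          exact this
      exact key.comp hseq

end
end

section
/- If the semigroup satisfies Condition 1.5 (f = 0 m-a.e. implies p_t f = 0 except on a set of capacity 0, in a potential-theoretic framework where capacity-0 sets form a σ-ideal), then every m-thin set has capacity 0. -/
open MeasureTheory Filter Set
open scoped ENNReal

noncomputable section

/-- The 1-resolvent `R f(x) = ∫_0^∞ e^{-t} p_t f(x) dt`. -/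
def Rres {E : Type*} [MeasurableSpace E] (P : ℝ → E → Measure E) (f : E → ℝ) (x : E) : ℝ :=
  ∫ t in Ioi (0 : ℝ), Real.exp (-t) * ap P t f x

lemma exp_neg_intOn : IntegrableOn (fun t : ℝ => Real.exp (-t)) (Ioi (0:ℝ)) := by
  have := exp_neg_integrableOn_Ioi (0:ℝ) (b := 1) one_pos
  simpa using this

/-- Lemma 2.19: if Condition 1.5 holds (`f = 0` `m`-a.e. implies `p_t f = 0` off a set of
capacity 0, the sets of capacity 0 forming a σ-ideal `𝒩`), then every `m`-thin set has
capacity 0. -/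
theorem m_thin_has_capacity_zero {E : Type*} [MeasurableSpace E]
    (m : Measure E) [SigmaFinite m]
    (P : ℝ → E → Measure E) [∀ t x, IsProbabilityMeasure (P t x)]
    (hPmeas : ∀ s : Set E, MeasurableSet s →
      Measurable (fun q : ℝ × E => (P q.1 q.2 s).toReal))
    -- semigroup property
    (hsemi : ∀ s t : ℝ, 0 ≤ s → 0 ≤ t → ∀ f : E → ℝ, Measurable f → (∃ C, ∀ x, |f x| ≤ C) →
      ap P s (ap P t f) = ap P (s + t) f)
    -- the semigroup is well defined on L²(m)-classes:
    (hwd : ∀ f : E → ℝ, Measurable f → (∀ᵐ x ∂m, f x = 0) →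
      ∀ t : ℝ, 0 < t → ∀ᵐ x ∂m, ap P t f x = 0)
    -- 𝒩 is the collection of "capacity zero" sets: a σ-ideal
    (𝒩 : Set (Set E))
    (h𝒩union : ∀ A : ℕ → Set E, (∀ n, A n ∈ 𝒩) → (⋃ n, A n) ∈ 𝒩)
    (h𝒩mono : ∀ A B : Set E, A ⊆ B → B ∈ 𝒩 → A ∈ 𝒩)
    -- Condition 1.5
    (hcond : ∀ f : E → ℝ, Measurable f → (∀ᵐ x ∂m, f x = 0) →
      ∀ t : ℝ, 0 < t → {x | ap P t f x ≠ 0} ∈ 𝒩)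
    -- N is m-thin
    (N B : Set E) (hBmeas : MeasurableSet B) (hB0 : m B = 0)
    (hN : N ⊆ {x | 0 < Rres P (B.indicator (fun _ => (1 : ℝ))) x}) :
    N ∈ 𝒩 := by
  set f : E → ℝ := B.indicator (fun _ => (1 : ℝ)) with hf_def
  have hf_meas : Measurable f := measurable_const.indicator hBmeas
  have hap_f : ∀ t x, ap P t f x = (P t x B).toReal := by
    intro t x
    simp [ap, hf_def, integral_indicator_const (1:ℝ) hBmeas, measureReal_def]
  have hPm : Measurable (fun q : ℝ × E => (P q.1 q.2 B).toReal) := hPmeas B hBmeas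
  have hap_f_meas : ∀ t, Measurable (fun x => ap P t f x) := by
    intro t
    have : Measurable (fun x : E => (P t x B).toReal) := hPm.comp (measurable_prodMk_left)
    simpa [hap_f] using this
  have hap_nonneg : ∀ t x, 0 ≤ ap P t f x := by
    intro t x; rw [hap_f]; exact ENNReal.toReal_nonneg
  have hap_le_one : ∀ t x, ap P t f x ≤ 1 := by
    intro t x; rw [hap_f]
    have h1 : P t x B ≤ 1 := prob_le_one
    calc (P t x B).toReal ≤ (1 : ℝ≥0∞).toReal :=
          ENNReal.toReal_mono (by simp) h1
      _ = 1 := by simp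
  set g : E → ℝ := Rres P f with hg_def
  have hg_eq : ∀ x, g x = ∫ t in Ioi (0:ℝ), Real.exp (-t) * (P t x B).toReal := by
    intro x
    exact setIntegral_congr_fun measurableSet_Ioi (fun t _ => by rw [hap_f])
  -- integrability of the resolvent integrand
  have hIntOn : ∀ x : E, IntegrableOn (fun t => Real.exp (-t) * (P t x B).toReal)
      (Ioi (0:ℝ)) := by
    intro x
    refine Integrable.mono' exp_neg_intOn ?_ ?_
    · exact ((measurable_neg.exp.mul (hPm.comp measurable_prodMk_right)).aestronglyMeasurable)
    · filter_upwards with t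
      have h0 : (0:ℝ) ≤ (P t x B).toReal := ENNReal.toReal_nonneg
      have h1 : (P t x B).toReal ≤ 1 := by
        simpa [hap_f] using hap_le_one t x
      rw [Real.norm_eq_abs, abs_of_nonneg (by positivity)]
      nlinarith [Real.exp_pos (-t)]
  have hg_meas : Measurable g := by
    have hF : StronglyMeasurable (fun p : E × ℝ => Real.exp (-p.2) * (P p.2 p.1 B).toReal) := by
      apply Measurable.stronglyMeasurable
      exact (measurable_snd.neg.exp).mul (hPm.comp (measurable_snd.prodMk measurable_fst))
    have := hF.integral_prod_right' (ν := volume.restrict (Ioi (0:ℝ)))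
    have heq : g = fun x => ∫ t in Ioi (0:ℝ), Real.exp (-t) * (P t x B).toReal := by
      funext x; exact hg_eq x
    rw [heq]; exact this.measurable
  have hg_nonneg : ∀ x, 0 ≤ g x := by
    intro x
    rw [hg_eq]
    apply setIntegral_nonneg measurableSet_Ioi
    intro t _; positivity
  -- g = 0 m-a.e.
  have hg0 : ∀ᵐ x ∂m, g x = 0 := by
    have hmeasset : MeasurableSet {p : ℝ × E | ap P p.1 f p.2 = 0} := by
      have : Measurable (fun p : ℝ × E => ap P p.1 f p.2) := by
        simpa [hap_f] using hPm
      exact this (measurableSet_singleton 0)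
    have hcomm := (Measure.ae_ae_comm (μ := volume.restrict (Ioi (0:ℝ))) (ν := m)
      (p := fun t x => ap P t f x = 0) hmeasset).mp ?_
    · filter_upwards [hcomm] with x hx
      rw [hg_eq]
      have : ∀ᵐ t ∂(volume.restrict (Ioi (0:ℝ))),
          Real.exp (-t) * (P t x B).toReal = 0 := by
        filter_upwards [hx] with t ht
        rw [← hap_f, ht, mul_zero]
      calc ∫ t in Ioi (0:ℝ), Real.exp (-t) * (P t x B).toReal
          = ∫ t in Ioi (0:ℝ), (0:ℝ) := integral_congr_ae this
        _ = 0 := integral_zero _ _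
    · rw [ae_restrict_iff' measurableSet_Ioi]
      filter_upwards with t ht
      exact hwd f hf_meas (by
        have : m B = 0 := hB0
        filter_upwards [measure_eq_zero_iff_ae_notMem.mp hB0] with x hx
        simp [hf_def, indicator_of_notMem hx]) t ht
  -- key identity : for s > 0, ap P s g x = ∫_{Ioi 0} e^{-t} (P (s+t) x B).toReal dt
  have hkey : ∀ (x : E) (s : ℝ), 0 < s →
      ap P s g x = ∫ t in Ioi (0:ℝ), Real.exp (-t) * (P (s + t) x B).toReal := by
    intro x s hs
    have hF_int : Integrable (fun p : E × ℝ => Real.exp (-p.2) * (P p.2 p.1 B).toReal)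
        ((P s x).prod (volume.restrict (Ioi (0:ℝ)))) := by
      have hFm : Measurable (fun p : E × ℝ => Real.exp (-p.2) * (P p.2 p.1 B).toReal) :=
        (measurable_snd.neg.exp).mul (hPm.comp (measurable_snd.prodMk measurable_fst))
      have hGint : Integrable (fun p : E × ℝ => Real.exp (-p.2))
          ((P s x).prod (volume.restrict (Ioi (0:ℝ)))) := by
        rw [integrable_prod_iff (by exact (measurable_snd.neg.exp).aestronglyMeasurable)]
        constructor
        · filter_upwards with y; exact exp_neg_intOn
        · simp only [Real.norm_eq_abs]
          have : (fun y : E => ∫ t in Ioi (0:ℝ), |Real.exp (-t)|) =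
              fun _ : E => ∫ t in Ioi (0:ℝ), Real.exp (-t) := by
            funext y; congr 1; funext t; exact abs_of_pos (Real.exp_pos _)
          rw [this]
          exact integrable_const _
      refine hGint.mono' hFm.aestronglyMeasurable ?_
      filter_upwards with p
      have h0 : (0:ℝ) ≤ (P p.2 p.1 B).toReal := ENNReal.toReal_nonneg
      have h1 : (P p.2 p.1 B).toReal ≤ 1 := by
        simpa [hap_f] using hap_le_one p.2 p.1
      rw [Real.norm_eq_abs, abs_of_nonneg (by positivity)]
      nlinarith [Real.exp_pos (-p.2)]
    have hswap := integral_integral_swap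
      (f := fun (y : E) (t : ℝ) => Real.exp (-t) * (P t y B).toReal)
      (μ := P s x) (ν := volume.restrict (Ioi (0:ℝ))) hF_int
    have step1 : ap P s g x = ∫ y, (∫ t in Ioi (0:ℝ),
        Real.exp (-t) * (P t y B).toReal) ∂(P s x) := by
      unfold ap
      exact integral_congr_ae (Filter.Eventually.of_forall (fun y => hg_eq y))
    rw [step1, hswap]
    apply setIntegral_congr_fun measurableSet_Ioi
    intro t ht
    show (∫ y, Real.exp (-t) * (P t y B).toReal ∂(P s x))
        = Real.exp (-t) * (P (s + t) x B).toReal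
    have : ∫ y, Real.exp (-t) * (P t y B).toReal ∂(P s x)
        = Real.exp (-t) * ∫ y, (P t y B).toReal ∂(P s x) := integral_const_mul _ _
    rw [this]
    congr 1
    have h1 : ∫ y, (P t y B).toReal ∂(P s x) = ap P s (ap P t f) x := by
      unfold ap
      exact integral_congr_ae (Filter.Eventually.of_forall (fun y => (hap_f t y).symm))
    rw [h1]
    have hbdd : ∃ C, ∀ y, |f y| ≤ C := by
      refine ⟨1, fun y => ?_⟩
      by_cases hy : y ∈ B <;> simp [hf_def, indicator, hy]
    have h3 := hsemi s t hs.le (le_of_lt ht) f hf_meas hbdd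
    have := congrFun h3 x
    rw [this, hap_f]
  -- Step B: if ap P (1/(j+1)) g x = 0 for all j then g x = 0
  have hstepB : ∀ x : E, (∀ j : ℕ, ap P (1 / (j + 1 : ℝ)) g x = 0) → g x = 0 := by
    intro x hall
    set h : ℝ → ℝ := fun t => (P t x B).toReal with hh_def
    have hh_meas : Measurable h := hPm.comp measurable_prodMk_right
    have hnullj : ∀ j : ℕ, volume ({u : ℝ | h u ≠ 0} ∩ Ioi (1 / (j + 1 : ℝ))) = 0 := by
      intro j
      set s : ℝ := 1 / (j + 1 : ℝ) with hs_def
      have hs_pos : 0 < s := by positivity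
      have hzero : ∫ t in Ioi (0:ℝ), Real.exp (-t) * (P (s + t) x B).toReal = 0 := by
        rw [← hkey x s hs_pos]; exact hall j
      have hmeas2 : Measurable (fun t : ℝ => Real.exp (-t) * (P (s + t) x B).toReal) :=
        (measurable_neg.exp).mul
          (hPm.comp ((measurable_const.add measurable_id).prodMk measurable_const))
      have hint2 : IntegrableOn (fun t : ℝ => Real.exp (-t) * (P (s + t) x B).toReal)
          (Ioi (0:ℝ)) := by
        refine Integrable.mono' exp_neg_intOn hmeas2.aestronglyMeasurable ?_
        filter_upwards with t
        have h0 : (0:ℝ) ≤ (P (s+t) x B).toReal := ENNReal.toReal_nonneg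
        have h1 : (P (s+t) x B).toReal ≤ 1 := by
          simpa [hap_f] using hap_le_one (s+t) x
        rw [Real.norm_eq_abs, abs_of_nonneg (by positivity)]
        nlinarith [Real.exp_pos (-t)]
      have hae : ∀ᵐ t ∂(volume.restrict (Ioi (0:ℝ))),
          Real.exp (-t) * (P (s + t) x B).toReal = 0 := by
        have hnn : 0 ≤ᵐ[volume.restrict (Ioi (0:ℝ))]
            fun t => Real.exp (-t) * (P (s + t) x B).toReal := by
          filter_upwards with t; positivity
        exact (integral_eq_zero_iff_of_nonneg_ae hnn hint2).mp hzero
      have haeh : ∀ᵐ t ∂(volume.restrict (Ioi (0:ℝ))), h (s + t) = 0 := by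
        filter_upwards [hae] with t ht
        rcases mul_eq_zero.mp ht with h' | h'
        · exact absurd h' (ne_of_gt (Real.exp_pos (-t)))
        · simpa [hh_def] using h'
      -- translate
      have htrans : Measurable (fun t : ℝ => s + t) := by fun_prop
      have hmap : Measure.map (fun t : ℝ => s + t) (volume.restrict (Ioi (0:ℝ)))
          = volume.restrict (Ioi s) := by
        have hpre : (fun t : ℝ => s + t) ⁻¹' Ioi s = Ioi 0 := by
          ext t; simp [lt_add_iff_pos_right]
        rw [← hpre, ← Measure.restrict_map htrans measurableSet_Ioi]
        congr 1
        exact (measurePreserving_add_left volume s).map_eq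
      have hset : MeasurableSet {u : ℝ | h u = 0} := hh_meas (measurableSet_singleton 0)
      have haeh2 : ∀ᵐ u ∂(volume.restrict (Ioi s)), h u = 0 := by
        rw [← hmap, ae_map_iff htrans.aemeasurable hset]
        exact haeh
      have := (ae_iff.mp haeh2)
      rw [Measure.restrict_apply₀'] at this
      · convert this using 2
      · exact measurableSet_Ioi.nullMeasurableSet
    have hunion : ({u : ℝ | h u ≠ 0} ∩ Ioi (0:ℝ)) ⊆
        ⋃ j : ℕ, ({u : ℝ | h u ≠ 0} ∩ Ioi (1 / (j + 1 : ℝ))) := by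
      rintro u ⟨hu1, hu2⟩
      obtain ⟨j, hj⟩ := exists_nat_one_div_lt (show (0:ℝ) < u from hu2)
      exact mem_iUnion.mpr ⟨j, hu1, hj⟩
    have hnull : volume ({u : ℝ | h u ≠ 0} ∩ Ioi (0:ℝ)) = 0 :=
      measure_mono_null hunion (measure_iUnion_null hnullj)
    have haefinal : ∀ᵐ t ∂(volume.restrict (Ioi (0:ℝ))), h t = 0 := by
      rw [ae_iff, Measure.restrict_apply₀' measurableSet_Ioi.nullMeasurableSet]
      convert hnull using 2
    rw [hg_eq]
    calc ∫ t in Ioi (0:ℝ), Real.exp (-t) * (P t x B).toReal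
        = ∫ t in Ioi (0:ℝ), (0:ℝ) := by
          apply integral_congr_ae
          filter_upwards [haefinal] with t ht
          simp [hh_def] at ht
          simp [ht]
      _ = 0 := integral_zero _ _
  -- conclude
  have hsub : N ⊆ ⋃ j : ℕ, {x | ap P (1 / (j + 1 : ℝ)) g x ≠ 0} := by
    intro x hx
    have hgx : 0 < g x := hN hx
    by_contra hnot
    simp only [mem_iUnion, mem_setOf_eq, not_exists, not_not] at hnot
    exact absurd (hstepB x hnot) (ne_of_gt hgx)
  refine h𝒩mono _ _ hsub (h𝒩union _ (fun j => ?_))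
  exact hcond g hg_meas hg0 (1 / (j + 1 : ℝ)) (by positivity)
end
end
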